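/- Let F^N, G^N be symmetric probability measures on E^N (invariant under coordinate permutations) and 1 ≤ j ≤ N. Then the normalized Kantorovich distances satisfy W₁(F^N_j, G^N_j) ≤ ( (j/N)·⌊N/j⌋ )^{-1} · W₁(F^N, G^N) ≤ 2·W₁(F^N, G^N), where F^N_j denotes the j-th marginal. -/

import Mathlib

open MeasureTheory ENNReal

noncomputable section

/-- Monge–Kantorovich transport "distance" with general cost `c`. -/
def Winf {α : Type*} [MeasurableSpace α] (c : α → α → ℝ≥0∞) (μ ν : Measure α) : ℝ≥0∞ :=
  ⨅ (π : Measure (α × α)) (_ : π.map Prod.fst = μ) (_ : π.map Prod.snd = ν),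
    ∫⁻ p, c p.1 p.2 ∂π

/-- Truncated distance `d_E(x,y) = min(|x-y|, 1)`. -/
def dE {α : Type*} [PseudoEMetricSpace α] (x y : α) : ℝ≥0∞ := min (edist x y) 1

/-- Normalized cost on `E^n`: `(1/n) Σᵢ d_E(xᵢ,yᵢ)`. -/
def costN (d n : ℕ) (X Y : Fin n → EuclideanSpace ℝ (Fin d)) : ℝ≥0∞ :=
  (∑ i, dE (X i) (Y i)) / n

/-- Marginal on the first `j` coordinates. -/
def marg (d N j : ℕ) (h : j ≤ N) (F : Measure (Fin N → EuclideanSpace ℝ (Fin d))) :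
    Measure (Fin j → EuclideanSpace ℝ (Fin d)) :=
  F.map (fun X => fun i : Fin j => X (Fin.castLE h i))

/-! Split the first `M * j` coordinates, `M = ⌊N/j⌋`, into `M` disjoint blocks of `j` coordinates.
For any coupling `π` of `F^N` and `G^N`, exchangeability makes the projection of `π` onto each block
a coupling of `F^N_j` and `G^N_j`. Hence `M · W₁(F^N_j, G^N_j)` is at most the total cost of the
blocks, which is at most `N / j` times the cost of `π`. Finally `N < j (M + 1) ≤ 2 j M`. -/

section Transport

variable {α β : Type*} [MeasurableSpace α] [MeasurableSpace β]

theorem le_Winf {c : α → α → ℝ≥0∞} {μ ν : Measure α} {x : ℝ≥0∞}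
    (h : ∀ π : Measure (α × α), π.map Prod.fst = μ → π.map Prod.snd = ν →
      x ≤ ∫⁻ p, c p.1 p.2 ∂π) :
    x ≤ Winf c μ ν :=
  le_iInf fun π => le_iInf fun h₁ => le_iInf fun h₂ => h π h₁ h₂

theorem Winf_le_lintegral {c : α → α → ℝ≥0∞} {μ ν : Measure α} {π : Measure (α × α)}
    (h₁ : π.map Prod.fst = μ) (h₂ : π.map Prod.snd = ν) :
    Winf c μ ν ≤ ∫⁻ p, c p.1 p.2 ∂π :=
  iInf_le_of_le π <| iInf_le_of_le h₁ <| iInf_le _ h₂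

theorem Winf_map_le_lintegral {c : α → α → ℝ≥0∞} (hc : Measurable fun p : α × α => c p.1 p.2)
    {f : β → α} (hf : Measurable f) {μ ν : Measure β} {π : Measure (β × β)}
    (h₁ : π.map Prod.fst = μ) (h₂ : π.map Prod.snd = ν) :
    Winf c (μ.map f) (ν.map f) ≤ ∫⁻ p, c (f p.1) (f p.2) ∂π := by
  have hff : Measurable (Prod.map f f) := hf.prodMap hf
  calc Winf c (μ.map f) (ν.map f) ≤ ∫⁻ p, c p.1 p.2 ∂(π.map (Prod.map f f)) := by
        refine Winf_le_lintegral ?_ ?_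
        · rw [Measure.map_map measurable_fst hff, ← h₁, Measure.map_map hf measurable_fst]
          rfl
        · rw [Measure.map_map measurable_snd hff, ← h₂, Measure.map_map hf measurable_snd]
          rfl
    _ = ∫⁻ p, c (f p.1) (f p.2) ∂π := lintegral_map hc hff

end Transport

theorem map_comp_eq_of_perm_invariant {α ι κ : Type*} [MeasurableSpace α] [Finite ι]
    {F : Measure (κ → α)} (hF : ∀ σ : Equiv.Perm κ, F.map (fun X => X ∘ σ) = F)
    {f g : ι → κ} (hf : Function.Injective f) (hg : Function.Injective g) :
    F.map (fun X => X ∘ g) = F.map (fun X => X ∘ f) := by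
  obtain ⟨σ, hσ⟩ := Equiv.Perm.exists_extending_pair f g hf hg
  have hcomp : (fun X : κ → α => X ∘ g) = (fun X => X ∘ f) ∘ (fun X => X ∘ σ) := by
    funext X i
    simp [hσ]
  rw [hcomp, ← Measure.map_map (by fun_prop) (by fun_prop), hF]

theorem sum_sum_le_sum_of_injective {ι κ ν M : Type*} [Fintype ι] [Fintype κ] [Fintype ν]
    [AddCommMonoid M] [Preorder M] [CanonicallyOrderedAdd M]
    {b : ι → κ → ν} (hb : Function.Injective (Function.uncurry b)) (f : ν → M) :
    ∑ k, ∑ i, f (b k i) ≤ ∑ m, f m := by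
  rw [← Fintype.sum_prod_type']
  exact (Finset.sum_map Finset.univ ⟨_, hb⟩ f).symm.trans_le
    (Finset.sum_le_sum_of_subset (Finset.subset_univ _))

theorem measurable_costN (d n : ℕ) :
    Measurable fun p : (Fin n → EuclideanSpace ℝ (Fin d)) × (Fin n → EuclideanSpace ℝ (Fin d)) =>
      costN d n p.1 p.2 := by
  unfold costN dE
  fun_prop

theorem measurable_costN_comp (d : ℕ) {m n : ℕ} (g : Fin m → Fin n) :
    Measurable fun p : (Fin n → EuclideanSpace ℝ (Fin d)) × (Fin n → EuclideanSpace ℝ (Fin d)) =>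
      costN d m (p.1 ∘ g) (p.2 ∘ g) := by
  have hg : Measurable fun X : Fin n → EuclideanSpace ℝ (Fin d) => X ∘ g :=
    measurable_pi_lambda _ fun _ => measurable_pi_apply _
  have h := (measurable_costN d m).comp ((hg.comp measurable_fst).prodMk (hg.comp measurable_snd))
  simp only [Function.comp_def] at h ⊢
  exact h

/-- The coordinate `k * j + i`, the `i`-th one of the `k`-th block. -/
def blockIndex {M j N : ℕ} (h : M * j ≤ N) (k : Fin M) (i : Fin j) : Fin N :=
  Fin.castLE h (finProdFinEquiv (k, i))

theorem uncurry_blockIndex_injective {M j N : ℕ} (h : M * j ≤ N) :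
    Function.Injective (Function.uncurry (blockIndex h)) :=
  (Fin.castLE_injective h).comp finProdFinEquiv.injective

theorem blockIndex_injective {M j N : ℕ} (h : M * j ≤ N) (k : Fin M) :
    Function.Injective (blockIndex h k) :=
  fun a a' hi => congrArg Prod.snd (@uncurry_blockIndex_injective _ _ _ h (k, a) (k, a') hi)

theorem div_mul_sum_costN_blockIndex_le {d M j N : ℕ} (hj : j ≠ 0) (h : M * j ≤ N)
    (X Y : Fin N → EuclideanSpace ℝ (Fin d)) :
    (j : ℝ≥0∞) / N * ∑ k, costN d j (X ∘ blockIndex h k) (Y ∘ blockIndex h k) ≤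
      costN d N X Y := by
  have hj' : (j : ℝ≥0∞) ≠ 0 := Nat.cast_ne_zero.mpr hj
  set T := ∑ k, ∑ i, dE (X (blockIndex h k i)) (Y (blockIndex h k i))
  calc (j : ℝ≥0∞) / N * ∑ k, costN d j (X ∘ blockIndex h k) (Y ∘ blockIndex h k)
      = (j * (j : ℝ≥0∞)⁻¹) * (T * (N : ℝ≥0∞)⁻¹) := by
        simp only [costN, Function.comp_apply, div_eq_mul_inv, ← Finset.sum_mul, T]
        ring
    _ = T / N := by rw [ENNReal.mul_inv_cancel hj' (natCast_ne_top j), one_mul, div_eq_mul_inv]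
    _ ≤ costN d N X Y := by
        rw [costN]
        gcongr
        exact sum_sum_le_sum_of_injective (uncurry_blockIndex_injective h) fun m => dE (X m) (Y m)

theorem div_mul_Winf_marg_le_lintegral {d N j : ℕ} (hj : 1 ≤ j) (hjN : j ≤ N)
    {F G : Measure (Fin N → EuclideanSpace ℝ (Fin d))}
    (hFsym : ∀ σ : Equiv.Perm (Fin N), F.map (fun X => X ∘ σ) = F)
    (hGsym : ∀ σ : Equiv.Perm (Fin N), G.map (fun X => X ∘ σ) = G)
    {π : Measure ((Fin N → EuclideanSpace ℝ (Fin d)) × (Fin N → EuclideanSpace ℝ (Fin d)))}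
    (h₁ : π.map Prod.fst = F) (h₂ : π.map Prod.snd = G) :
    (j : ℝ≥0∞) / N * ((N / j : ℕ) : ℝ≥0∞) * Winf (costN d j) (marg d N j hjN F) (marg d N j hjN G) ≤
      ∫⁻ p, costN d N p.1 p.2 ∂π := by
  have hMj : N / j * j ≤ N := Nat.div_mul_le_self N j
  have hblock : ∀ k, Winf (costN d j) (marg d N j hjN F) (marg d N j hjN G) ≤
      ∫⁻ p, costN d j (p.1 ∘ blockIndex hMj k) (p.2 ∘ blockIndex hMj k) ∂π := by
    intro k
    have hmarg : ∀ H : Measure (Fin N → EuclideanSpace ℝ (Fin d)),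
        (∀ σ : Equiv.Perm (Fin N), H.map (fun X => X ∘ σ) = H) →
          marg d N j hjN H = H.map (fun X => X ∘ blockIndex hMj k) := fun H hH =>
      (map_comp_eq_of_perm_invariant hH (Fin.castLE_injective hjN) (blockIndex_injective hMj k)).symm
    rw [hmarg F hFsym, hmarg G hGsym]
    exact Winf_map_le_lintegral (measurable_costN d j) (by fun_prop) h₁ h₂
  have hmeas k := measurable_costN_comp d (blockIndex hMj k)
  calc (j : ℝ≥0∞) / N * ((N / j : ℕ) : ℝ≥0∞) * Winf (costN d j) (marg d N j hjN F) (marg d N j hjN G)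
      = (j : ℝ≥0∞) / N * ∑ _k : Fin (N / j), Winf (costN d j) (marg d N j hjN F) (marg d N j hjN G) := by
        rw [Finset.sum_const, Finset.card_univ, Fintype.card_fin, nsmul_eq_mul, mul_assoc]
    _ ≤ (j : ℝ≥0∞) / N * ∑ k, ∫⁻ p, costN d j (p.1 ∘ blockIndex hMj k) (p.2 ∘ blockIndex hMj k) ∂π := by
        gcongr with k
        exact hblock k
    _ = ∫⁻ p, (j : ℝ≥0∞) / N * ∑ k, costN d j (p.1 ∘ blockIndex hMj k) (p.2 ∘ blockIndex hMj k) ∂π := by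
        rw [lintegral_const_mul _ (Finset.measurable_sum _ fun k _ => hmeas k),
          lintegral_finsetSum _ fun k _ => hmeas k]
    _ ≤ ∫⁻ p, costN d N p.1 p.2 ∂π :=
        lintegral_mono fun p => div_mul_sum_costN_blockIndex_le (by omega) hMj p.1 p.2

theorem div_mul_natDiv_ne_zero {j N : ℕ} (hj : 1 ≤ j) (hjN : j ≤ N) :
    (j : ℝ≥0∞) / N * ((N / j : ℕ) : ℝ≥0∞) ≠ 0 := by
  have hM : N / j ≠ 0 := (Nat.div_pos hjN (by omega)).ne'
  exact mul_ne_zero (ENNReal.div_pos (by exact_mod_cast (by omega : j ≠ 0)) (natCast_ne_top N)).ne'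
    (by exact_mod_cast hM)

theorem div_mul_natDiv_ne_top {j N : ℕ} (hN : N ≠ 0) :
    (j : ℝ≥0∞) / N * ((N / j : ℕ) : ℝ≥0∞) ≠ ∞ :=
  ENNReal.mul_ne_top (ENNReal.div_ne_top (natCast_ne_top j) (by exact_mod_cast hN))
    (natCast_ne_top _)

theorem inv_div_mul_natDiv_le_two {j N : ℕ} (hj : 1 ≤ j) (hjN : j ≤ N) :
    ((j : ℝ≥0∞) / N * ((N / j : ℕ) : ℝ≥0∞))⁻¹ ≤ 2 := by
  have hnat : N ≤ j * (N / j) * 2 := by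
    have := Nat.div_add_mod N j
    have := Nat.mod_lt N (by omega : j > 0)
    have := (Nat.one_le_div_iff (by omega : 0 < j)).mpr hjN
    nlinarith
  rw [ENNReal.inv_le_iff_inv_le, div_eq_mul_inv, mul_right_comm, ← div_eq_mul_inv,
    ENNReal.le_div_iff_mul_le (Or.inl (by exact_mod_cast (by omega : N ≠ 0)))
      (Or.inl (natCast_ne_top N)),
    ← ENNReal.div_eq_inv_mul, ENNReal.div_le_iff two_ne_zero ofNat_ne_top]
  exact_mod_cast hnat

theorem stmt3_general (d N j : ℕ) (hj : 1 ≤ j) (hjN : j ≤ N)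
    (F G : Measure (Fin N → EuclideanSpace ℝ (Fin d)))
    (hFsym : ∀ σ : Equiv.Perm (Fin N), F.map (fun X => X ∘ σ) = F)
    (hGsym : ∀ σ : Equiv.Perm (Fin N), G.map (fun X => X ∘ σ) = G) :
    Winf (costN d j) (marg d N j hjN F) (marg d N j hjN G) ≤
        ((j : ℝ≥0∞) / (N : ℝ≥0∞) * ((N / j : ℕ) : ℝ≥0∞))⁻¹ * Winf (costN d N) F G ∧
      ((j : ℝ≥0∞) / (N : ℝ≥0∞) * ((N / j : ℕ) : ℝ≥0∞))⁻¹ * Winf (costN d N) F G ≤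
        2 * Winf (costN d N) F G := by
  have hkey := le_Winf fun π h₁ h₂ => div_mul_Winf_marg_le_lintegral hj hjN hFsym hGsym h₁ h₂
  refine ⟨(ENNReal.mul_le_iff_le_inv (div_mul_natDiv_ne_zero hj hjN)
    (div_mul_natDiv_ne_top (by omega))).mp hkey, ?_⟩
  gcongr
  exact inv_div_mul_natDiv_le_two hj hjN

/-- For symmetric probability measures `F^N, G^N` on `E^N` and `1 ≤ j ≤ N`:
`W₁(F^N_j, G^N_j) ≤ ((j/N)·⌊N/j⌋)⁻¹ · W₁(F^N, G^N) ≤ 2·W₁(F^N, G^N)`. -/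
theorem stmt3 (d N j : ℕ) (hj : 1 ≤ j) (hjN : j ≤ N)
    (F G : Measure (Fin N → EuclideanSpace ℝ (Fin d)))
    [IsProbabilityMeasure F] [IsProbabilityMeasure G]
    (hFsym : ∀ σ : Equiv.Perm (Fin N), F.map (fun X => X ∘ σ) = F)
    (hGsym : ∀ σ : Equiv.Perm (Fin N), G.map (fun X => X ∘ σ) = G) :
    Winf (costN d j) (marg d N j hjN F) (marg d N j hjN G) ≤
        ((j : ℝ≥0∞) / (N : ℝ≥0∞) * ((N / j : ℕ) : ℝ≥0∞))⁻¹ * Winf (costN d N) F G ∧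
      ((j : ℝ≥0∞) / (N : ℝ≥0∞) * ((N / j : ℕ) : ℝ≥0∞))⁻¹ * Winf (costN d N) F G ≤
        2 * Winf (costN d N) F G :=
  stmt3_general d N j hj hjN F G hFsym hGsym
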